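/- Let p, b, q ∈ ℂ. For j ≥ 1 set β̃_j = −((j+1)/2 · b + (j−1)/2 · p + q) if j is odd, and β̃_j = −(j/2)(b + p) if j is even; set γ̃_j = ((j−1)/2)! (q−p) (−p−b)^{(j−1)/2} if j is odd, and γ̃_j = 0 if j is even. For n ≥ 1 define the (n+1)×(n+1) complex matrix M̃_n = (a_{ij})_{i,j ∈ {1,…,n+1}} by (with ℓ = ⌊i/2⌋ and θ = ⌊(j−1)/2⌋): a_{ij} = 0 if j ≥ i+2; a_{ij} = ∏_{s=1}^{ℓ} β̃_{2s} if j = i+1; a_{ij} = 0 if i, j ∈ {1,…,n}, j ≤ i, and both i and j are even; a_{ij} = C(ℓ, θ) · ∏_{s=1}^{θ} β̃_{2s} · ∏_{s=1}^{i−j+1} β̃_{n+2−j−s} if i, j ∈ {1,…,n}, j ≤ i, and i or j is odd; a_{n+1,j} = γ̃_{n+1−j} if j ∈ {1,…,n} is odd, and a_{n+1,j} = 0 if j ∈ {1,…,n} is even; a_{n+1,n+1} = (−1)^n. Then for every m ≥ 1: det M̃_{2m} = (−1)^m ∏_{j=1}^{m} β̃_{2j−1} · β̃_{2j}^{ 2(m−j)+1},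 and det M̃_{2m−1} = (−1)^m · m · β̃_2 · ∏_{j=1}^{m−1} β̃_{2j−1} · β̃_{2j}^{ 2(m−j)}. -/

import Mathlib

open Finset

/-- `β̃_j = −((j+1)/2 · b + (j−1)/2 · p + q)` for odd `j`, `β̃_j = −(j/2)(b+p)` for even `j`. -/
noncomputable def βt (p b q : ℂ) (j : ℕ) : ℂ :=
  if j % 2 = 1 then -(((j : ℂ) + 1) / 2 * b + ((j : ℂ) - 1) / 2 * p + q)
  else -((j : ℂ) / 2) * (b + p)

/-- `γ̃_j = ((j−1)/2)! (q−p) (−p−b)^{(j−1)/2}` for odd `j`, `γ̃_j = 0` for even `j`. -/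
noncomputable def γt (p b q : ℂ) (j : ℕ) : ℂ :=
  if j % 2 = 1 then (Nat.factorial ((j - 1) / 2) : ℂ) * (q - p) * (-p - b) ^ ((j - 1) / 2)
  else 0

/-- The `(n+1) × (n+1)` matrix `M̃_n = (a_{ij})` with `1`-based indices
`i = i₀+1`, `j = j₀+1` (here `i₀, j₀ : Fin (n+1)`), `ℓ = ⌊i/2⌋`, `θ = ⌊(j−1)/2⌋`:
`a_{ij} = 0` if `j ≥ i+2`; `a_{ij} = ∏_{s=1}^{ℓ} β̃_{2s}` if `j = i+1`;
`a_{n+1,n+1} = (−1)^n`; `a_{n+1,j} = γ̃_{n+1−j}` if `j ∈ {1,…,n}` is odd and `0` if even;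
for `i, j ∈ {1,…,n}` with `j ≤ i`: `0` if `i` and `j` are both even, and otherwise
`C(ℓ,θ) ∏_{s=1}^{θ} β̃_{2s} ∏_{s=1}^{i−j+1} β̃_{n+2−j−s}`. -/
noncomputable def Mt (p b q : ℂ) (n : ℕ) : Matrix (Fin (n + 1)) (Fin (n + 1)) ℂ :=
  fun i₀ j₀ =>
    let i := (i₀ : ℕ) + 1
    let j := (j₀ : ℕ) + 1
    let ℓ := i / 2
    let θ := (j - 1) / 2
    if i + 2 ≤ j then 0
    else if j = i + 1 then ∏ s ∈ Finset.Icc 1 ℓ, βt p b q (2 * s)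
    else if i = n + 1 then
      if j = n + 1 then (-1 : ℂ) ^ n
      else if j % 2 = 1 then γt p b q (n + 1 - j) else 0
    else if i % 2 = 0 ∧ j % 2 = 0 then 0
    else (ℓ.choose θ : ℂ) * (∏ s ∈ Finset.Icc 1 θ, βt p b q (2 * s)) *
      ∏ s ∈ Finset.Icc 1 (i - j + 1), βt p b q (n + 2 - j - s)

/-!
Put `x = -(b + q)` and `y = -(b + p)`, so that `β̃_{2k+1} = x + k y`, `β̃_{2k} = k y` and
`γ̃_{2k+1} = (y - x) β̃_2 ⋯ β̃_{2k}`; the matrix then makes sense over any commutative ring.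
Multiplying its last row by `S` (`S = 1` for even `n`, `S = β̃_n β̃_2 β̃_4 ⋯ β̃_{n-1}` for odd `n`)
gives an LU decomposition `D M̃_n = L U`, with `L` unit lower triangular and `U` upper
bidiagonal whose superdiagonal is that of `M̃_n`. Away from the last row `L` has the entries
`c(i, j) β̃_{n-i} ⋯ β̃_{n-1-j}`, where the coefficients `c(i, j)` satisfy a signed Pascal recursion
in `i`. Hence `S det M̃_n` is the product of the diagonal of `U`, whose entries
`(-1)^j β̃_2 β̃_4 ⋯ β̃_{2⌊j/2⌋} β̃_{n-j}` (`0 ≤ j < n`) multiply out to the stated formula. For odd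
`n`, `S` is cancelled after perturbing `x` and `y` by an indeterminate, where it is no longer a zero
divisor.
-/

namespace MtDet

section Bidiagonal

variable {R : Type*} [CommRing R]

def upperBidiagonal (N : ℕ) (d e : ℕ → R) : Matrix (Fin N) (Fin N) R :=
  Matrix.of fun k j => if (j : ℕ) = k then d k else if (j : ℕ) = k + 1 then e k else 0

lemma mul_upperBidiagonal_apply {N : ℕ} (a : ℕ → ℕ → R) (d e : ℕ → R) (i j : Fin N) :
    (Matrix.of (fun i k : Fin N => a i k) * upperBidiagonal N d e) i j =
      a i j * d j + if (j : ℕ) = 0 then 0 else a i (j - 1) * e (j - 1) := by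
  have hsplit : ∀ k : ℕ, (if (j : ℕ) = k then d k else if (j : ℕ) = k + 1 then e k else 0) =
      (if k = j then d k else 0) + (if k + 1 = j then e k else 0) := by
    intro k; split_ifs <;> first | omega | simp
  simp only [Matrix.mul_apply, Matrix.of_apply, upperBidiagonal, hsplit, mul_add, mul_ite, mul_zero,
    sum_add_distrib]
  rw [Fin.sum_univ_eq_sum_range (fun k => if k = (j : ℕ) then a i k * d k else 0),
    Fin.sum_univ_eq_sum_range (fun k => if k + 1 = (j : ℕ) then a i k * e k else 0),
    sum_ite_eq' _ _ _, if_pos (mem_range.mpr j.isLt)]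
  congr 1
  rcases j with ⟨_ | j, hj⟩
  · simp
  · simp only [Nat.add_right_cancel_iff, sum_ite_eq', mem_range, Nat.add_sub_cancel,
      if_pos (by omega : j < N), if_neg (Nat.succ_ne_zero j)]

lemma det_upperBidiagonal (N : ℕ) (d e : ℕ → R) :
    (upperBidiagonal N d e).det = ∏ k ∈ range N, d k := by
  rw [Matrix.det_of_isUpperTriangular, ← Fin.prod_univ_eq_prod_range]
  · simp [upperBidiagonal]
  · intro k j (hjk : j < k)
    have : (j : ℕ) < k := hjk
    simp only [upperBidiagonal, Matrix.of_apply]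
    rw [if_neg (by omega), if_neg (by omega)]

end Bidiagonal

lemma prod_Icc_one_sub_reflect {N : Type*} [CommMonoid N] (f : ℕ → N) {a c : ℕ} (h : c < a) :
    ∏ s ∈ Icc 1 c, f (a - s) = ∏ t ∈ Icc (a - c) (a - 1), f t := by
  rw [← Ico_add_one_right_eq_Icc, prod_Ico_reflect f 1 (by omega : c + 1 ≤ a + 1),
    ← Ico_add_one_right_eq_Icc]
  congr 2 <;> omega

def lowerCoeff (i j : ℕ) : ℕ := if i % 2 = 0 ∧ j % 2 = 1 then 0 else (i / 2).choose (j / 2)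

lemma lowerCoeff_of_lt {i j : ℕ} (h : i < j) : lowerCoeff i j = 0 := by
  unfold lowerCoeff
  split_ifs
  · rfl
  · exact Nat.choose_eq_zero_of_lt (by omega)

lemma lowerCoeff_self (i : ℕ) : lowerCoeff i i = 1 := by
  simp [lowerCoeff]

lemma lowerCoeff_zero_right (i : ℕ) : lowerCoeff i 0 = 1 := by
  simp [lowerCoeff]

lemma lowerCoeff_succ_succ {R : Type*} [CommRing R] (i j : ℕ) :
    (lowerCoeff (i + 1) (j + 1) : R) = (-1) ^ (j + 1) * lowerCoeff i (j + 1) + lowerCoeff i j := by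
  rcases Nat.even_or_odd' i with ⟨a, rfl | rfl⟩ <;>
    rcases Nat.even_or_odd' j with ⟨b, rfl | rfl⟩ <;>
    simp [lowerCoeff, Nat.add_mod, pow_succ, Nat.mul_add_div]
  -- only `i` and `j` odd is left, and there it is Pascal's rule
  rw [show (2 * a + 1 + 1) / 2 = a + 1 by omega, show (2 * b + 1 + 1) / 2 = b + 1 by omega,
    Nat.choose_succ_succ', Nat.cast_add, add_comm]

variable {R : Type*} [CommRing R] (x y : R)

def beta (j : ℕ) : R :=
  if j % 2 = 1 then x + (((j - 1) / 2 : ℕ) : R) * y else ((j / 2 : ℕ) : R) * y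

def gamma (j : ℕ) : R :=
  if j % 2 = 1 then (Nat.factorial ((j - 1) / 2) : R) * (y - x) * y ^ ((j - 1) / 2) else 0

def evenProd (ℓ : ℕ) : R := ∏ s ∈ Icc 1 ℓ, beta x y (2 * s)

/-- `Mt` with `βt, γt` replaced by `beta x y, gamma x y`, on `0`-based natural indices. -/
def entry (n i₀ j₀ : ℕ) : R :=
  let i := i₀ + 1
  let j := j₀ + 1
  if i + 2 ≤ j then 0
  else if j = i + 1 then evenProd x y (i / 2)
  else if i = n + 1 then
    if j = n + 1 then (-1 : R) ^ n
    else if j % 2 = 1 then gamma x y (n + 1 - j) else 0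
  else if i % 2 = 0 ∧ j % 2 = 0 then 0
  else ((i / 2).choose ((j - 1) / 2) : R) * evenProd x y ((j - 1) / 2) *
    ∏ s ∈ Icc 1 (i - j + 1), beta x y (n + 2 - j - s)

def M (n : ℕ) : Matrix (Fin (n + 1)) (Fin (n + 1)) R :=
  Matrix.of fun i j => entry x y n i j

def lower (n i j : ℕ) : R :=
  if i < n then lowerCoeff i j * ∏ t ∈ Icc (n - i) (n - 1 - j), beta x y t
  else if j = n then 1
  else if n % 2 = 1 then
    (y - x) * evenProd x y ((n - 1 - j) / 2) * ∏ s ∈ Ioc (j / 2) (n / 2), beta x y (2 * s)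
  else 0

def pivot (n j : ℕ) : R :=
  if j < n then (-1) ^ j * evenProd x y (j / 2) * beta x y (n - j)
  else if n % 2 = 0 then 1 else -evenProd x y ((n + 1) / 2)

def lastScale (n : ℕ) : R :=
  if n % 2 = 1 then evenProd x y (n / 2) * beta x y n else 1

/-- The `(i, j)` entry of `L * U`, where `L = (lower n i j)` and `U` is upper bidiagonal with
diagonal `pivot n` and superdiagonal `evenProd ((k + 1) / 2)`. -/
def luEntry (n i j : ℕ) : R :=
  lower x y n i j * pivot x y n j + if j = 0 then 0 else lower x y n i (j - 1) * evenProd x y (j / 2)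

lemma beta_odd (k : ℕ) : beta x y (2 * k + 1) = x + k * y := by
  simp [beta, Nat.add_mod]

lemma beta_even (k : ℕ) : beta x y (2 * k) = k * y := by
  simp [beta]

lemma beta_two : beta x y 2 = y := by
  simpa using beta_even x y 1

lemma beta_odd_add_even (a b : ℕ) :
    beta x y (2 * a + 1) + beta x y (2 * b) = beta x y (2 * (a + b) + 1) := by
  simp only [beta_odd, beta_even]; push_cast; ring

lemma evenProd_zero : evenProd x y 0 = 1 := by simp [evenProd]

lemma evenProd_succ (ℓ : ℕ) :
    evenProd x y (ℓ + 1) = evenProd x y ℓ * beta x y (2 * (ℓ + 1)) :=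
  prod_Icc_succ_top (by omega) _

lemma evenProd_eq (ℓ : ℕ) : evenProd x y ℓ = ℓ.factorial * y ^ ℓ := by
  induction ℓ with
  | zero => simp [evenProd_zero]
  | succ ℓ ih => rw [evenProd_succ, ih, beta_even, Nat.factorial_succ]; push_cast; ring

lemma evenProd_mul_prod_Ioc {u w : ℕ} (h : u ≤ w) :
    evenProd x y u * ∏ s ∈ Ioc u w, beta x y (2 * s) = evenProd x y w := by
  simp only [evenProd, show ∀ v, Icc 1 v = Ioc 0 v from Icc_add_one_left_eq_Ioc 0]
  exact prod_Ioc_consecutive _ u.zero_le h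

lemma gamma_odd (k : ℕ) : gamma x y (2 * k + 1) = (y - x) * evenProd x y k := by
  simp [gamma, Nat.add_mod, evenProd_eq]; ring

lemma gamma_even (k : ℕ) : gamma x y (2 * k) = 0 := by
  simp [gamma]

lemma entry_of_lt {n i j : ℕ} (hi : i < n) (hj : j ≤ n) :
    entry x y n i j =
      lowerCoeff (i + 1) j * evenProd x y (j / 2) * ∏ t ∈ Icc (n - i) (n - j), beta x y t := by
  simp only [entry, show ¬(i + 1 = n + 1) by omega, if_false]
  split_ifs with h₁ h₂ h₃
  · simp [lowerCoeff_of_lt (by omega : i + 1 < j)]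
  · obtain rfl : j = i + 1 := by omega
    simp [lowerCoeff_self, Icc_eq_empty (by omega : ¬ n - i ≤ n - (i + 1))]
  · simp [lowerCoeff, show (i + 1) % 2 = 0 ∧ j % 2 = 1 by omega]
  · rw [lowerCoeff, if_neg (by omega), show j + 1 - 1 = j by omega,
      show n + 2 - (j + 1) = n + 1 - j by omega,
      prod_Icc_one_sub_reflect _ (by omega : i + 1 - (j + 1) + 1 < n + 1 - j)]
    congr 3 <;> omega

lemma entry_last_self (n : ℕ) : entry x y n n n = (-1) ^ n := by
  simp [entry]

lemma entry_last_of_lt {n j : ℕ} (hj : j < n) :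
    entry x y n n j = if j % 2 = 0 then gamma x y (n - j) else 0 := by
  simp only [entry, show ¬(n + 1 + 2 ≤ j + 1) by omega, show ¬(j + 1 = n + 1 + 1) by omega,
    show ¬(j + 1 = n + 1) by omega, show (j + 1) % 2 = 1 ↔ j % 2 = 0 by omega,
    show n + 1 - (j + 1) = n - j by omega, if_false, if_true]

lemma lower_of_lt {n i : ℕ} (hi : i < n) (j : ℕ) :
    lower x y n i j = lowerCoeff i j * ∏ t ∈ Icc (n - i) (n - 1 - j), beta x y t :=
  if_pos hi

lemma lower_self {n i : ℕ} (hi : i ≤ n) : lower x y n i i = 1 := by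
  rcases hi.lt_or_eq with hi | rfl
  · simp [lower_of_lt x y hi, lowerCoeff_self, Icc_eq_empty (by omega : ¬ n - i ≤ n - 1 - i)]
  · simp [lower]

lemma lower_eq_zero_of_lt {n i j : ℕ} (hij : i < j) (hj : j ≤ n) : lower x y n i j = 0 := by
  simp [lower_of_lt x y (by omega : i < n), lowerCoeff_of_lt hij]

lemma lower_last_of_even {n j : ℕ} (hn : n % 2 = 0) (hj : j < n) : lower x y n n j = 0 := by
  simp [lower, hj.ne, hn]

lemma lower_last_mul_evenProd (w : ℕ) {j : ℕ} (hj : j < 2 * w + 1) :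
    lower x y (2 * w + 1) (2 * w + 1) j * evenProd x y (j / 2) =
      (y - x) * evenProd x y ((2 * w - j) / 2) * evenProd x y w := by
  simp only [lower, lt_irrefl, hj.ne, Nat.mul_add_mod, show (2 * w + 1) / 2 = w by omega,
    show 2 * w + 1 - 1 - j = 2 * w - j by omega, if_true, if_false]
  rw [← evenProd_mul_prod_Ioc x y (by omega : j / 2 ≤ w)]
  ring

lemma pivot_of_lt {n j : ℕ} (hj : j < n) :
    pivot x y n j = (-1) ^ j * evenProd x y (j / 2) * beta x y (n - j) :=
  if_pos hj

lemma lastScale_two_mul_add_one (w : ℕ) :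
    lastScale x y (2 * w + 1) = evenProd x y w * beta x y (2 * w + 1) := by
  simp [lastScale, show (2 * w + 1) / 2 = w by omega]

lemma lower_mul_pivot_of_lt {n i j : ℕ} (hi : i < n) (hj : j ≤ n) :
    lower x y n i j * pivot x y n j =
      (-1) ^ j * lowerCoeff i j * evenProd x y (j / 2) * ∏ t ∈ Icc (n - i) (n - j), beta x y t := by
  rcases le_or_gt j i with hji | hij
  · have hpeel : ∏ t ∈ Icc (n - i) (n - j), beta x y t =
        (∏ t ∈ Icc (n - i) (n - 1 - j), beta x y t) * beta x y (n - j) := by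
      rw [show n - j = n - 1 - j + 1 by omega, prod_Icc_succ_top (by omega)]
    rw [lower_of_lt x y hi, pivot_of_lt x y (by omega), hpeel]
    ring
  · simp [lower_of_lt x y hi, lowerCoeff_of_lt hij]

lemma entry_eq_luEntry_of_lt {n i j : ℕ} (hi : i < n) (hj : j ≤ n) :
    entry x y n i j = luEntry x y n i j := by
  rw [luEntry, entry_of_lt x y hi hj, lower_mul_pivot_of_lt x y hi hj]
  rcases j with _ | j
  · simp [lowerCoeff_zero_right]
  · rw [if_neg j.succ_ne_zero, lower_of_lt x y hi, lowerCoeff_succ_succ,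
      Nat.add_sub_cancel, show n - 1 - j = n - (j + 1) by omega]
    ring

lemma entry_last_eq_luEntry_of_even {n j : ℕ} (hn : n % 2 = 0) (hj : j ≤ n) :
    entry x y n n j = luEntry x y n n j := by
  rcases hj.lt_or_eq with hj | rfl
  · have h0 : entry x y n n j = 0 := by
      rw [entry_last_of_lt x y hj]
      split_ifs
      · rw [show n - j = 2 * ((n - j) / 2) by omega, gamma_even]
      · rfl
    simp [luEntry, h0, lower_last_of_even x y hn hj,
      lower_last_of_even x y hn (by omega : j - 1 < n)]
  · rcases Nat.eq_zero_or_pos j with rfl | hpos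
    · simp [luEntry, entry_last_self, lower_self, pivot]
    · simp [luEntry, entry_last_self, lower_self, pivot, hn, hpos.ne',
        lower_last_of_even x y hn (by omega : j - 1 < j), (Nat.even_iff.mpr hn).neg_one_pow]

lemma lastScale_mul_entry_last_even_col (w u : ℕ) (hu : u ≤ w) :
    lastScale x y (2 * w + 1) * entry x y (2 * w + 1) (2 * w + 1) (2 * u) =
      luEntry x y (2 * w + 1) (2 * w + 1) (2 * u) := by
  have h0 := lower_last_mul_evenProd x y w (j := 2 * u) (by omega)
  rw [show 2 * u / 2 = u by omega, show (2 * w - 2 * u) / 2 = w - u by omega] at h0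
  rw [luEntry, lastScale_two_mul_add_one, entry_last_of_lt x y (by omega),
    pivot_of_lt x y (by omega), if_pos (by omega), show 2 * w + 1 - 2 * u = 2 * (w - u) + 1 by omega,
    gamma_odd, show 2 * u / 2 = u by omega, pow_mul, neg_one_sq, one_pow, one_mul]
  rcases u with _ | v
  · simp only [if_true, add_zero, Nat.sub_zero] at h0 ⊢
    linear_combination -beta x y (2 * w + 1) * h0
  · have h1 := lower_last_mul_evenProd x y w (j := 2 * v + 1) (by omega)
    rw [show (2 * v + 1) / 2 = v by omega,
      show (2 * w - (2 * v + 1)) / 2 = w - (v + 1) by omega] at h1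
    have hb := beta_odd_add_even x y (w - (v + 1)) (v + 1)
    rw [show w - (v + 1) + (v + 1) = w by omega] at hb
    rw [if_neg (by omega), show 2 * (v + 1) - 1 = 2 * v + 1 by omega]
    linear_combination -beta x y (2 * (w - (v + 1)) + 1) * h0 -
      lower x y (2 * w + 1) (2 * w + 1) (2 * v + 1) * evenProd_succ x y v -
      beta x y (2 * (v + 1)) * h1 - (y - x) * evenProd x y (w - (v + 1)) * evenProd x y w * hb

lemma lastScale_mul_entry_last_odd_col (w u : ℕ) (hu : u < w) :
    lastScale x y (2 * w + 1) * entry x y (2 * w + 1) (2 * w + 1) (2 * u + 1) =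
      luEntry x y (2 * w + 1) (2 * w + 1) (2 * u + 1) := by
  have h0 := lower_last_mul_evenProd x y w (j := 2 * u + 1) (by omega)
  have h1 := lower_last_mul_evenProd x y w (j := 2 * u) (by omega)
  have hs := evenProd_succ x y (w - (u + 1))
  rw [show (2 * u + 1) / 2 = u by omega,
    show (2 * w - (2 * u + 1)) / 2 = w - (u + 1) by omega] at h0
  rw [show 2 * u / 2 = u by omega, show (2 * w - 2 * u) / 2 = w - u by omega] at h1
  rw [show w - (u + 1) + 1 = w - u by omega] at hs
  rw [luEntry, entry_last_of_lt x y (by omega), pivot_of_lt x y (by omega), if_neg (by omega),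
    if_neg (by omega), Nat.add_sub_cancel, show 2 * w + 1 - (2 * u + 1) = 2 * (w - u) by omega,
    show (2 * u + 1) / 2 = u by omega, pow_succ, pow_mul, neg_one_sq, one_pow]
  linear_combination beta x y (2 * (w - u)) * h0 - h1 - (y - x) * evenProd x y w * hs

lemma lastScale_mul_entry_last_last (w : ℕ) :
    lastScale x y (2 * w + 1) * entry x y (2 * w + 1) (2 * w + 1) (2 * w + 1) =
      luEntry x y (2 * w + 1) (2 * w + 1) (2 * w + 1) := by
  have h0 := lower_last_mul_evenProd x y w (j := 2 * w) (by omega)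
  rw [show 2 * w / 2 = w by omega, Nat.sub_self, Nat.zero_div, evenProd_zero] at h0
  rw [luEntry, lastScale_two_mul_add_one, entry_last_self, lower_self x y le_rfl, if_neg (by omega),
    Nat.add_sub_cancel, show (2 * w + 1) / 2 = w by omega, pivot, if_neg (lt_irrefl _),
    if_neg (by omega), show (2 * w + 1 + 1) / 2 = w + 1 by omega, evenProd_succ,
    beta_odd, beta_even, pow_succ, pow_mul, neg_one_sq, one_pow]
  push_cast
  linear_combination -h0

lemma rowScale_mul_entry_eq_luEntry {n i j : ℕ} (hi : i ≤ n) (hj : j ≤ n) :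
    (if i = n then lastScale x y n else 1) * entry x y n i j = luEntry x y n i j := by
  rcases hi.lt_or_eq with hi | rfl
  · rw [if_neg hi.ne, one_mul, entry_eq_luEntry_of_lt x y hi hj]
  · rw [if_pos rfl]
    obtain ⟨w, rfl | rfl⟩ := Nat.even_or_odd' i
    · rw [lastScale, if_neg (by omega), one_mul, entry_last_eq_luEntry_of_even x y (by omega) hj]
    · obtain ⟨u, rfl | rfl⟩ := Nat.even_or_odd' j
      · exact lastScale_mul_entry_last_even_col x y w u (by omega)
      · rcases (show u < w ∨ u = w by omega) with hu | rfl
        · exact lastScale_mul_entry_last_odd_col x y w u hu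
        · exact lastScale_mul_entry_last_last x y u

lemma det_lower (n : ℕ) : (Matrix.of fun i j : Fin (n + 1) => lower x y n i j).det = 1 := by
  rw [Matrix.det_of_isLowerTriangular]
  · exact prod_eq_one fun i _ => lower_self x y (Nat.lt_succ_iff.mp i.isLt)
  · intro i j hij
    exact lower_eq_zero_of_lt x y (hij : i < j) (Nat.lt_succ_iff.mp j.isLt)

lemma lastScale_mul_det (n : ℕ) :
    lastScale x y n * (M x y n).det = ∏ k ∈ range (n + 1), pivot x y n k := by
  have hLU : Matrix.diagonal (fun i : Fin (n + 1) => if (i : ℕ) = n then lastScale x y n else 1) *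
      M x y n = Matrix.of (fun i j : Fin (n + 1) => lower x y n i j) *
        upperBidiagonal (n + 1) (pivot x y n) fun k => evenProd x y ((k + 1) / 2) := by
    ext i j
    rw [Matrix.diagonal_mul, mul_upperBidiagonal_apply]
    rw [M, Matrix.of_apply,
      rowScale_mul_entry_eq_luEntry x y (Nat.lt_succ_iff.mp i.isLt) (Nat.lt_succ_iff.mp j.isLt),
      luEntry]
    rcases Nat.eq_zero_or_pos (j : ℕ) with hj | hj
    · simp [hj]
    · rw [Nat.sub_add_cancel hj]
  have := congrArg Matrix.det hLU
  rw [Matrix.det_mul, Matrix.det_mul, Matrix.det_diagonal, det_lower, det_upperBidiagonal, one_mul,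
    Fin.prod_univ_castSucc] at this
  simpa [Fin.val_castSucc, Nat.ne_of_lt] using this

lemma prod_range_pivot (n : ℕ) :
    ∏ k ∈ range n, pivot x y n k =
      ∏ k ∈ range n, ((-1) ^ k * evenProd x y (k / 2) * beta x y (k + 1)) := by
  rw [prod_congr rfl fun k hk => pivot_of_lt x y (mem_range.mp hk), prod_mul_distrib,
    prod_mul_distrib (f := fun k => (-1) ^ k * evenProd x y (k / 2)) (g := fun k => beta x y (k + 1)),
    ← prod_range_reflect (fun k => beta x y (k + 1)) n]
  congr 1
  exact prod_congr rfl fun k hk => by rw [show n - 1 - k + 1 = n - k by have := mem_range.mp hk; omega]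

lemma prod_Icc_mul_pow_add (m c : ℕ) :
    ∏ j ∈ Icc 1 m, beta x y (2 * j - 1) * beta x y (2 * j) ^ (2 * (m - j) + 1 + c) =
      (∏ j ∈ Icc 1 m, beta x y (2 * j - 1) * beta x y (2 * j) ^ (2 * (m - j) + 1)) *
        evenProd x y m ^ c := by
  simp only [pow_add, ← mul_assoc]
  rw [prod_mul_distrib, prod_pow, evenProd]

lemma prod_range_two_mul (m : ℕ) :
    ∏ k ∈ range (2 * m), ((-1) ^ k * evenProd x y (k / 2) * beta x y (k + 1)) =
      (-1) ^ m * ∏ j ∈ Icc 1 m, beta x y (2 * j - 1) * beta x y (2 * j) ^ (2 * (m - j) + 1) := by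
  induction m with
  | zero => simp
  | succ m ih =>
    have hexp : ∏ j ∈ Icc 1 m, beta x y (2 * j - 1) * beta x y (2 * j) ^ (2 * (m + 1 - j) + 1) =
        ∏ j ∈ Icc 1 m, beta x y (2 * j - 1) * beta x y (2 * j) ^ (2 * (m - j) + 1 + 2) :=
      prod_congr rfl fun j hj => by
        rw [show 2 * (m + 1 - j) + 1 = 2 * (m - j) + 1 + 2 by have := (mem_Icc.mp hj).2; omega]
    rw [show 2 * (m + 1) = 2 * m + 1 + 1 by ring, prod_range_succ, prod_range_succ, ih,
      prod_Icc_succ_top (by omega), hexp, prod_Icc_mul_pow_add,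
      show (2 * m + 1) / 2 = m by omega, show 2 * m / 2 = m by omega,
      show 2 * (m + 1) - 1 = 2 * m + 1 by omega, Nat.sub_self, pow_succ, pow_mul]
    simp only [Nat.mul_zero, zero_add, pow_one, neg_one_sq, one_pow,
      show 2 * m + 1 + 1 = 2 * (m + 1) by ring]
    ring

lemma det_two_mul (m : ℕ) :
    (M x y (2 * m)).det =
      (-1) ^ m * ∏ j ∈ Icc 1 m, beta x y (2 * j - 1) * beta x y (2 * j) ^ (2 * (m - j) + 1) := by
  have h := lastScale_mul_det x y (2 * m)
  rw [lastScale, if_neg (by omega), one_mul, prod_range_succ, prod_range_pivot, pivot,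
    if_neg (lt_irrefl _), if_pos (by omega), mul_one, prod_range_two_mul] at h
  exact h

lemma lastScale_mul_det_two_mul_add_one (m : ℕ) :
    lastScale x y (2 * m + 1) * (M x y (2 * m + 1)).det =
      lastScale x y (2 * m + 1) * ((-1) ^ (m + 1) * ((m + 1 : ℕ) : R) * beta x y 2 *
        ∏ j ∈ Icc 1 m, beta x y (2 * j - 1) * beta x y (2 * j) ^ (2 * (m + 1 - j))) := by
  have hexp : ∏ j ∈ Icc 1 m, beta x y (2 * j - 1) * beta x y (2 * j) ^ (2 * (m + 1 - j)) =
      ∏ j ∈ Icc 1 m, beta x y (2 * j - 1) * beta x y (2 * j) ^ (2 * (m - j) + 1 + 1) :=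
    prod_congr rfl fun j hj => by
      rw [show 2 * (m + 1 - j) = 2 * (m - j) + 1 + 1 by have := (mem_Icc.mp hj).2; omega]
  rw [lastScale_mul_det, prod_range_succ, prod_range_pivot, prod_range_succ, prod_range_two_mul,
    hexp, prod_Icc_mul_pow_add, lastScale_two_mul_add_one, pivot, if_neg (lt_irrefl _),
    if_neg (by omega), show (2 * m + 1 + 1) / 2 = m + 1 by omega, show 2 * m / 2 = m by omega,
    evenProd_succ, beta_even, beta_two, pow_succ, pow_mul, neg_one_sq, one_pow, pow_one]
  push_cast
  ring

section Map

variable {S : Type*} [CommRing S] (f : R →+* S)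

lemma map_beta (j : ℕ) : f (beta x y j) = beta (f x) (f y) j := by
  unfold beta; split_ifs <;> simp

lemma map_gamma (j : ℕ) : f (gamma x y j) = gamma (f x) (f y) j := by
  unfold gamma; split_ifs <;> simp

lemma map_evenProd (ℓ : ℕ) : f (evenProd x y ℓ) = evenProd (f x) (f y) ℓ := by
  simp [evenProd, map_prod, map_beta]

lemma mapMatrix_M (n : ℕ) : f.mapMatrix (M x y n) = M (f x) (f y) n := by
  ext i j
  simp only [RingHom.mapMatrix_apply, Matrix.map_apply, M, Matrix.of_apply, entry]
  split_ifs <;> simp [map_prod, map_beta, map_gamma, map_evenProd]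

end Map

open Polynomial in
lemma det_two_mul_add_one [IsDomain R] [CharZero R] (m : ℕ) :
    (M x y (2 * m + 1)).det =
      (-1) ^ (m + 1) * ((m + 1 : ℕ) : R) * beta x y 2 *
        ∏ j ∈ Icc 1 m, beta x y (2 * j - 1) * beta x y (2 * j) ^ (2 * (m + 1 - j)) := by
  set x' : R[X] := X + C x
  set y' : R[X] := X + C y
  have hS : lastScale x' y' (2 * m + 1) ≠ 0 := by
    rw [lastScale_two_mul_add_one, evenProd_eq, beta_odd]
    refine mul_ne_zero (mul_ne_zero (by exact_mod_cast m.factorial_ne_zero)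
      (pow_ne_zero _ (X_add_C_ne_zero y))) fun h => ?_
    have h₁ := congrArg (coeff · 1) h
    simp only [x', y', coeff_add, coeff_X_one, coeff_C, coeff_natCast_mul, one_ne_zero, if_false,
      add_zero, mul_one, coeff_zero] at h₁
    exact Nat.cast_add_one_ne_zero m (by rwa [add_comm] at h₁)
  have h := congrArg (evalRingHom 0)
    (mul_left_cancel₀ hS (lastScale_mul_det_two_mul_add_one x' y' m))
  have hx : evalRingHom 0 x' = x := by simp [x']
  have hy : evalRingHom 0 y' = y := by simp [y']
  rw [RingHom.map_det, mapMatrix_M, hx, hy] at h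
  simpa only [map_mul, map_prod, map_pow, map_neg, map_one, map_natCast, map_beta, hx, hy] using h

lemma βt_eq_beta (p b q : ℂ) : βt p b q = beta (-(b + q)) (-(b + p)) := by
  funext j
  obtain ⟨k, rfl | rfl⟩ := Nat.even_or_odd' j
  · rw [beta_even, βt, if_neg (by omega)]; push_cast; ring
  · rw [beta_odd, βt, if_pos (by omega)]; push_cast; ring

lemma γt_eq_gamma (p b q : ℂ) : γt p b q = gamma (-(b + q)) (-(b + p)) := by
  funext j
  unfold γt gamma
  split_ifs
  · ring_nf
  · rfl

lemma Mt_eq_M (p b q : ℂ) (n : ℕ) : Mt p b q n = M (-(b + q)) (-(b + p)) n := by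
  ext i j
  simp only [Mt, M, entry, evenProd, Matrix.of_apply, βt_eq_beta, γt_eq_gamma]

end MtDet

/-- for every `m ≥ 1`,
`det M̃_{2m} = (−1)^m ∏_{j=1}^{m} β̃_{2j−1} β̃_{2j}^{2(m−j)+1}` and
`det M̃_{2m−1} = (−1)^m m β̃_2 ∏_{j=1}^{m−1} β̃_{2j−1} β̃_{2j}^{2(m−j)}`. -/
theorem det_Mt (p b q : ℂ) (m : ℕ) (hm : 1 ≤ m) :
    (Mt p b q (2 * m)).det =
        (-1 : ℂ) ^ m * ∏ j ∈ Finset.Icc 1 m,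
          βt p b q (2 * j - 1) * βt p b q (2 * j) ^ (2 * (m - j) + 1) ∧
    (Mt p b q (2 * m - 1)).det =
        (-1 : ℂ) ^ m * (m : ℂ) * βt p b q 2 * ∏ j ∈ Finset.Icc 1 (m - 1),
          βt p b q (2 * j - 1) * βt p b q (2 * j) ^ (2 * (m - j)) := by
  obtain ⟨k, rfl⟩ : ∃ k, m = k + 1 := ⟨m - 1, by omega⟩
  rw [MtDet.Mt_eq_M, MtDet.Mt_eq_M, MtDet.βt_eq_beta, MtDet.det_two_mul,
    show 2 * (k + 1) - 1 = 2 * k + 1 by omega, MtDet.det_two_mul_add_one, Nat.add_sub_cancel]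
  exact ⟨rfl, rfl⟩
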